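/- arXiv:2602.14943 — 3 statements merged into one kernel-verified Lean document; each statement's English description precedes it below -/
import Mathlib

section
/- Let G be a graph and let r and s be two rays of G that are edge-equivalent (but possibly not vertex-equivalent). If V₁ ⊆ V(G) is a finite vertex set such that r and s have tails in different components of G − V₁, then there exists a vertex w ∈ V₁ that edge-dominates both r and s. -/
open SimpleGraph

variable {V : Type*}

/-- A ray in `G`: a one-way infinite path. -/
structure GraphRay (G : SimpleGraph V) where
  f : ℕ → V
  inj : Function.Injective f
  adj : ∀ n, G.Adj (f n) (f (n + 1))

/-- Rays `r` and `s` are edge-equivalent: for every finite edge set `F`,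
they have tails in the same connected component of `G - F`. -/
def RayEdgeEquiv (G : SimpleGraph V) (r s : GraphRay G) : Prop :=
  ∀ F : Finset (Sym2 V), ∃ N, ∀ m ≥ N, ∀ n ≥ N,
    (G.deleteEdges ↑F).Reachable (r.f m) (s.f n)

/-- Rays `r` and `s` are vertex-equivalent: for every finite vertex set `X`,
they have tails in the same connected component of `G - X`. -/
def RayVertexEquiv (G : SimpleGraph V) (r s : GraphRay G) : Prop :=
  ∀ X : Finset V, ∃ N, ∀ m ≥ N, ∀ n ≥ N,
    ∃ (hm : r.f m ∈ ((↑X : Set V)ᶜ)) (hn : s.f n ∈ ((↑X : Set V)ᶜ)),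
      (G.induce ((↑X : Set V)ᶜ)).Reachable ⟨r.f m, hm⟩ ⟨s.f n, hn⟩

/-- Vertices `u` and `v` are edge-equivalent: for every finite edge set `F`,
they lie in the same connected component of `G - F`. -/
def VertexEdgeEquiv (G : SimpleGraph V) (u v : V) : Prop :=
  ∀ F : Finset (Sym2 V), (G.deleteEdges ↑F).Reachable u v

/-- The edge-equivalence class of a vertex `v`. -/
def edgeClass (G : SimpleGraph V) (v : V) : Set V := {u | VertexEdgeEquiv G v u}

/-- `v` edge-dominates the ray `r`: for every finite edge set `F`, `r` has a tail
in the same connected component of `G - F` as `v`. -/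
def EdgeDominates (G : SimpleGraph V) (v : V) (r : GraphRay G) : Prop :=
  ∀ F : Finset (Sym2 V), ∃ N, ∀ n ≥ N, (G.deleteEdges ↑F).Reachable v (r.f n)

/-- `v` dominates the ray `r`: there are infinitely many `v`–`r` paths,
pairwise disjoint except at `v`. -/
def Dominates (G : SimpleGraph V) (v : V) (r : GraphRay G) : Prop :=
  ∃ k : ℕ → ℕ, StrictMono k ∧
    ∃ P : ∀ n, G.Walk v (r.f (k n)),
      (∀ n, (P n).IsPath) ∧
      ∀ m n, m ≠ n → ∀ x, x ∈ (P m).support → x ∈ (P n).support → x = v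

/-- A set `S` of vertices contains the ray `t`: `t` passes through infinitely
many vertices of `S`. -/
def SetContainsRay (G : SimpleGraph V) (S : Set V) (t : GraphRay G) : Prop :=
  {n : ℕ | t.f n ∈ S}.Infinite

/-!
For a fixed finite edge set `F`, a walk in `G - F` from a late vertex of `r` to a late vertex
of `s` cannot avoid the separator `V₁`, and any vertex of `V₁` on it reaches the tails of both
rays in `G - F`. As `V₁` is finite and reaching tails in `G - F` only gets harder as `F` grows,
taking `F` to be the union of finitely many witnesses shows that one vertex of `V₁` works for
every `F` at once.
-/

theorem Finset.exists_forall_of_forall_exists_of_antitone {ι α : Type*} (s : Finset ι)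
    {P : ι → Finset α → Prop} (hP : ∀ i, Antitone (P i)) (h : ∀ F, ∃ i ∈ s, P i F) :
    ∃ i ∈ s, ∀ F, P i F := by
  classical
  by_contra! hbad
  choose! F hF using hbad
  obtain ⟨i, hi, hPi⟩ := h (s.biUnion F)
  exact hF i hi (hP i (Finset.subset_biUnion_of_mem F hi) hPi)

theorem SimpleGraph.Walk.exists_mem_support_notMem_of_not_reachable_induce
    {G : SimpleGraph V} {S : Set V} {u v : V} (W : G.Walk u v) (hu : u ∈ S) (hv : v ∈ S)
    (h : ¬ (G.induce S).Reachable ⟨u, hu⟩ ⟨v, hv⟩) : ∃ x ∈ W.support, x ∉ S := by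
  by_contra! hW
  exact h ⟨W.induce S hW⟩

theorem exists_mem_separator_reachable_tails_deleteEdges {G : SimpleGraph V} {r s : GraphRay G}
    (hE : RayEdgeEquiv G r s) {V₁ : Finset V}
    (hsep : ∃ N, (∀ n ≥ N, r.f n ∉ V₁ ∧ s.f n ∉ V₁) ∧
      ∀ m ≥ N, ∀ n ≥ N,
        ∀ (hm : r.f m ∈ ((↑V₁ : Set V)ᶜ)) (hn : s.f n ∈ ((↑V₁ : Set V)ᶜ)),
          ¬ (G.induce ((↑V₁ : Set V)ᶜ)).Reachable ⟨r.f m, hm⟩ ⟨s.f n, hn⟩)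
    (F : Finset (Sym2 V)) :
    ∃ w ∈ V₁, ∃ N, ∀ n ≥ N,
      (G.deleteEdges ↑F).Reachable w (r.f n) ∧ (G.deleteEdges ↑F).Reachable w (s.f n) := by
  classical
  obtain ⟨N₀, hN₀⟩ := hE F
  obtain ⟨N, hout, hsep⟩ := hsep
  set n₀ := max N₀ N
  obtain ⟨W⟩ := hN₀ n₀ (le_max_left _ _) n₀ (le_max_left _ _)
  have hr : r.f n₀ ∈ (↑V₁ : Set V)ᶜ := (hout n₀ (le_max_right _ _)).1
  have hs : s.f n₀ ∈ (↑V₁ : Set V)ᶜ := (hout n₀ (le_max_right _ _)).2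
  obtain ⟨w, hwW, hwV⟩ :=
    (W.mapLe (G.deleteEdges_le _)).exists_mem_support_notMem_of_not_reachable_induce hr hs
      (hsep n₀ (le_max_right _ _) n₀ (le_max_right _ _) hr hs)
  rw [Walk.support_mapLe_eq_support] at hwW
  refine ⟨w, by simpa using hwV, n₀, fun n hn => ⟨?_, ?_⟩⟩
  · exact (W.dropUntil w hwW).reachable.trans (hN₀ n (by omega) n₀ (le_max_left _ _)).symm
  · exact (W.takeUntil w hwW).reachable.symm.trans (hN₀ n₀ (le_max_left _ _) n (by omega))

/-- If edge-equivalent rays `r` and `s` are separated by a finite vertex set `V₁`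
(their tails lie in different components of `G - V₁`), then some vertex of `V₁`
edge-dominates both `r` and `s`. -/
theorem exists_vertex_edgeDominating_both (G : SimpleGraph V) (r s : GraphRay G)
    (hE : RayEdgeEquiv G r s) (V₁ : Finset V)
    (hsep : ∃ N, (∀ n ≥ N, r.f n ∉ V₁ ∧ s.f n ∉ V₁) ∧
      ∀ m ≥ N, ∀ n ≥ N,
        ∀ (hm : r.f m ∈ ((↑V₁ : Set V)ᶜ)) (hn : s.f n ∈ ((↑V₁ : Set V)ᶜ)),
          ¬ (G.induce ((↑V₁ : Set V)ᶜ)).Reachable ⟨r.f m, hm⟩ ⟨s.f n, hn⟩) :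
    ∃ w ∈ V₁, EdgeDominates G w r ∧ EdgeDominates G w s := by
  have hanti : ∀ w, Antitone fun F : Finset (Sym2 V) => ∃ N, ∀ n ≥ N,
      (G.deleteEdges ↑F).Reachable w (r.f n) ∧ (G.deleteEdges ↑F).Reachable w (s.f n) :=
    fun w F F' hF ⟨N, h⟩ =>
      have hle := G.deleteEdges_anti (Finset.coe_subset.mpr hF)
      ⟨N, fun n hn => ⟨(h n hn).1.mono hle, (h n hn).2.mono hle⟩⟩
  obtain ⟨w, hw, hdom⟩ := V₁.exists_forall_of_forall_exists_of_antitone hanti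
    (exists_mem_separator_reachable_tails_deleteEdges hE hsep)
  exact ⟨w, hw, fun F => (hdom F).imp fun _ h n hn => (h n hn).1,
    fun F => (hdom F).imp fun _ h n hn => (h n hn).2⟩
end

section
/- Let G be an infinite graph in which any two rays that are edge-equivalent and both non-dominated are vertex-equivalent (G is end-correlated). Then for every finite vertex set F ⊆ V(G) and every vertex v ∈ V(G), there is at most one connected component C of G − F such that the edge-class C_v ∩ C contains a non-dominated ray. -/
open SimpleGraph

variable {V : Type*}

lemma ray_edge_inj (G : SimpleGraph V) (t : GraphRay G) :
    Function.Injective (fun k => s(t.f k, t.f (k+1))) := by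
  intro k j h
  simp only [Sym2.eq, Sym2.rel_iff', Prod.mk.injEq, Prod.swap_prod_mk] at h
  rcases h with ⟨h1, _⟩ | ⟨h1, h2⟩
  · exact t.inj h1
  · have hk := t.inj h1
    have hj := t.inj h2
    omega

lemma ray_tail_reachable (G : SimpleGraph V) (t : GraphRay G) (F : Finset (Sym2 V)) :
    ∃ N, ∀ k ≥ N, ∀ l ≥ k, (G.deleteEdges ↑F).Reachable (t.f k) (t.f l) := by
  have hfin : {k : ℕ | s(t.f k, t.f (k+1)) ∈ (↑F : Set (Sym2 V))}.Finite :=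
    Set.Finite.preimage (Function.Injective.injOn (ray_edge_inj G t)) F.finite_toSet
  obtain ⟨b, hb⟩ := hfin.bddAbove
  refine ⟨b + 1, fun k hk l hl => ?_⟩
  induction l, hl using Nat.le_induction with
  | base => exact Reachable.refl _
  | succ l hl ih =>
    refine ih.trans (Adj.reachable ?_)
    rw [SimpleGraph.deleteEdges_adj]
    refine ⟨t.adj l, fun hmem => ?_⟩
    have := hb hmem
    omega

/-- If `G` is end-correlated (edge-equivalent non-dominated rays are
vertex-equivalent), then for every finite vertex set `F` and vertex `v` there is
at most one component `C` of `G - F` such that `edgeClass v ∩ C` contains a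
non-dominated ray. -/
theorem unique_component_of_end_correlated {V : Type*} [Infinite V] (G : SimpleGraph V)
    (hcorr : ∀ r s : GraphRay G, RayEdgeEquiv G r s →
      (¬ ∃ w, Dominates G w r) → (¬ ∃ w, Dominates G w s) →
      RayVertexEquiv G r s) :
    ∀ (F : Finset V) (v : V)
      (C C' : (G.induce ((↑F : Set V)ᶜ)).ConnectedComponent),
      (∃ t : GraphRay G, (¬ ∃ w, Dominates G w t) ∧
        {n : ℕ | t.f n ∈ edgeClass G v ∧
          ∃ hn : t.f n ∈ ((↑F : Set V)ᶜ),
            (G.induce ((↑F : Set V)ᶜ)).connectedComponentMk ⟨t.f n, hn⟩ = C}.Infinite) →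
      (∃ t : GraphRay G, (¬ ∃ w, Dominates G w t) ∧
        {n : ℕ | t.f n ∈ edgeClass G v ∧
          ∃ hn : t.f n ∈ ((↑F : Set V)ᶜ),
            (G.induce ((↑F : Set V)ᶜ)).connectedComponentMk ⟨t.f n, hn⟩ = C'}.Infinite) →
      C = C' := by
  intro F v C C' ht ht'
  obtain ⟨t, hnd, hinf⟩ := ht
  obtain ⟨t', hnd', hinf'⟩ := ht'
  have hedge : RayEdgeEquiv G t t' := by
    intro Fe
    obtain ⟨N1, hN1⟩ := ray_tail_reachable G t Fe
    obtain ⟨N2, hN2⟩ := ray_tail_reachable G t' Fe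
    obtain ⟨m0, hm0mem, hm0⟩ := hinf.exists_gt N1
    obtain ⟨n0, hn0mem, hn0⟩ := hinf'.exists_gt N2
    refine ⟨max m0 n0, fun m hm n hn => ?_⟩
    have h1 : (G.deleteEdges ↑Fe).Reachable (t.f m0) (t.f m) :=
      hN1 m0 (le_of_lt hm0) m (le_trans (le_max_left m0 n0) hm)
    have h2 : (G.deleteEdges ↑Fe).Reachable (t'.f n0) (t'.f n) :=
      hN2 n0 (le_of_lt hn0) n (le_trans (le_max_right m0 n0) hn)
    have hv1 : (G.deleteEdges ↑Fe).Reachable v (t.f m0) := hm0mem.1 Fe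
    have hv2 : (G.deleteEdges ↑Fe).Reachable v (t'.f n0) := hn0mem.1 Fe
    exact h1.symm.trans (hv1.symm.trans (hv2.trans h2))
  have hvert := hcorr t t' hedge hnd hnd'
  obtain ⟨N, hN⟩ := hvert F
  obtain ⟨m, hmmem, hm⟩ := hinf.exists_gt N
  obtain ⟨n, hnmem, hn⟩ := hinf'.exists_gt N
  obtain ⟨hm', hn', hr⟩ := hN m (le_of_lt hm) n (le_of_lt hn)
  obtain ⟨_, hmF, hCeq⟩ := hmmem
  obtain ⟨_, hnF, hC'eq⟩ := hnmem
  rw [← hCeq, ← hC'eq]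
  exact ConnectedComponent.sound hr
end

section
/- Let G be a graph and suppose vertices u and v are edge-equivalent (infinitely edge-connected). If r is a ray that passes through infinitely many vertices of the edge-class C_v, then every vertex of C_v edge-dominates r. -/
open SimpleGraph

variable {V : Type*}

/-- If `u ∼_E v` and a ray `r` passes through infinitely many vertices of the
edge-class of `v`, then every vertex of this edge-class edge-dominates `r`. -/
theorem edgeClass_edgeDominates (G : SimpleGraph V) (u v : V)
    (huv : VertexEdgeEquiv G u v) (r : GraphRay G)
    (hr : {n : ℕ | r.f n ∈ edgeClass G v}.Infinite) :
    ∀ w ∈ edgeClass G v, EdgeDominates G w r := by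
  intro w hw F
  -- the set of indices whose ray edge lies in F is finite
  have hBfin : {n : ℕ | s(r.f n, r.f (n + 1)) ∈ F}.Finite := by
    have : Set.InjOn (fun n => s(r.f n, r.f (n + 1)))
        {n : ℕ | s(r.f n, r.f (n + 1)) ∈ F} := by
      intro a _ b _ hab
      simp only [Sym2.eq, Sym2.rel_iff', Prod.mk.injEq, Prod.swap_prod_mk] at hab
      rcases hab with ⟨h1, _⟩ | ⟨h1, h2⟩
      · exact r.inj h1
      · have e1 : a = b + 1 := r.inj h1
        have e2 : a + 1 = b := r.inj h2
        omega
    apply Set.Finite.of_finite_image _ this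
    exact F.finite_toSet.subset (fun e he => by
      obtain ⟨n, hn, rfl⟩ := he; exact hn)
  obtain ⟨N, hN⟩ := hBfin.bddAbove
  -- along the ray past N, consecutive vertices are adjacent in G - F
  have hstep : ∀ n, N < n → (G.deleteEdges (↑F : Set (Sym2 V))).Adj (r.f n) (r.f (n + 1)) := by
    intro n hn
    rw [SimpleGraph.deleteEdges_adj]
    refine ⟨r.adj n, fun hmem => ?_⟩
    have := hN hmem
    omega
  have hseg : ∀ k n, N < n →
      (G.deleteEdges (↑F : Set (Sym2 V))).Reachable (r.f n) (r.f (n + k)) := by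
    intro k
    induction k with
    | zero => intro n _; rfl
    | succ k ih =>
      intro n hn
      exact (ih n hn).trans ⟨(hstep (n + k) (by omega)).toWalk⟩
  refine ⟨N + 1, ?_⟩
  intro n hn
  obtain ⟨m, hm, hnm⟩ := hr.exists_gt n
  have h1 : (G.deleteEdges (↑F : Set (Sym2 V))).Reachable w (r.f m) :=
    (hw F).symm.trans (hm F)
  have h2 : (G.deleteEdges (↑F : Set (Sym2 V))).Reachable (r.f n) (r.f m) := by
    have : m = n + (m - n) := by omega
    rw [this]
    exact hseg (m - n) n (by omega)
  exact h1.trans h2.symm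
end
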